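/- Let θ ∈ (0,1), K > 0, ℓ > 2·K^(1/(1-θ)) + 1, and suppose Ψ : [1, ∞) → ℝ is C¹, strictly increasing, satisfies Ψ(s) ≥ ℓ·s and Ψ'(s) ≥ ℓ for all s ≥ 1, and Ψ(s) ≤ K·(1+s)·(Ψ'(s))^θ for all s ≥ 1. Then this leads to a contradiction; i.e., no such function Ψ exists on all of [1, ∞). -/
import Mathlib


/-- Core blowup argument: there is no `C¹`, strictly increasing function
`Ψ : [1,∞) → ℝ` with `Ψ(s) ≥ ℓ s`, `Ψ'(s) ≥ ℓ` and the superlinear differential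
inequality `Ψ(s) ≤ K (1+s) (Ψ'(s))^θ` for all `s ≥ 1`, provided `θ ∈ (0,1)`,
`K > 0` and `ℓ > 2 K^(1/(1-θ)) + 1`. -/
theorem stmt5 (θ K ℓ : ℝ) (hθ : θ ∈ Set.Ioo (0:ℝ) 1) (hK : 0 < K)
    (hℓ : 2 * K ^ ((1:ℝ)/(1-θ)) + 1 < ℓ)
    (Ψ Ψ' : ℝ → ℝ)
    (hderiv : ∀ s : ℝ, 1 ≤ s → HasDerivAt Ψ (Ψ' s) s)
    (hcont : ContinuousOn Ψ' (Set.Ici (1:ℝ)))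
    (hmono : StrictMonoOn Ψ (Set.Ici (1:ℝ)))
    (hlb : ∀ s : ℝ, 1 ≤ s → ℓ * s ≤ Ψ s)
    (hdlb : ∀ s : ℝ, 1 ≤ s → ℓ ≤ Ψ' s)
    (hineq : ∀ s : ℝ, 1 ≤ s → Ψ s ≤ K * (1 + s) * (Ψ' s) ^ θ) :
    False := by
  obtain ⟨hθ0, hθ1⟩ := hθ
  set p : ℝ := 1/θ with hpdef
  have hKr : (0:ℝ) < K ^ ((1:ℝ)/(1-θ)) := Real.rpow_pos_of_pos hK _
  have hp1 : 1 < p := by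
    rw [hpdef, lt_div_iff₀ hθ0]; linarith
  have hppos : (0:ℝ) < p := by linarith
  have hθp : θ * p = 1 := by
    rw [hpdef]; field_simp
  have hℓ1 : 1 < ℓ := by linarith
  have hΨpos : ∀ s, 1 ≤ s → 0 < Ψ s := by
    intro s hs
    have := hlb s hs
    nlinarith
  have hΨ'pos : ∀ s, 1 ≤ s → 0 < Ψ' s := by
    intro s hs
    have := hdlb s hs
    linarith
  set H : ℝ → ℝ := fun s => (Ψ s) ^ (1-p) - K ^ (-p) * (1+s) ^ (1-p) with hHdef
  set D : ℝ → ℝ := fun s =>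
    Ψ' s * (1-p) * (Ψ s) ^ (1-p-1) - K ^ (-p) * (1 * (1-p) * (1+s) ^ (1-p-1)) with hDdef
  have h1s : ∀ s : ℝ, 1 ≤ s → (0:ℝ) < 1 + s := fun s hs => by linarith
  have hH : ∀ s, 1 ≤ s → HasDerivAt H (D s) s := by
    intro s hs
    have h1 : HasDerivAt (fun s => (Ψ s) ^ (1-p)) (Ψ' s * (1-p) * (Ψ s) ^ (1-p-1)) s :=
      (hderiv s hs).rpow_const (Or.inl (hΨpos s hs).ne')
    have h2 : HasDerivAt (fun s : ℝ => (1+s) ^ (1-p)) (1 * (1-p) * (1+s) ^ (1-p-1)) s :=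
      ((hasDerivAt_id s).const_add 1).rpow_const (Or.inl (h1s s hs).ne')
    exact h1.sub (h2.const_mul _)
  have hDnonpos : ∀ s, 1 ≤ s → D s ≤ 0 := by
    intro s hs
    have hΨp := hΨpos s hs
    have hΨ'p := hΨ'pos s hs
    have h1sp := h1s s hs
    have hKsp : (0:ℝ) < K * (1+s) := mul_pos hK h1sp
    -- key: (K*(1+s))^(-p) ≤ (Ψ s)^(-p) * Ψ' s
    have key : (K * (1+s)) ^ (-p) ≤ (Ψ s) ^ (-p) * Ψ' s := by
      have h1 : (Ψ s) ^ p ≤ (K * (1+s)) ^ p * Ψ' s := by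
        calc (Ψ s) ^ p ≤ (K * (1+s) * (Ψ' s) ^ θ) ^ p :=
              Real.rpow_le_rpow hΨp.le (hineq s hs) hppos.le
          _ = (K * (1+s)) ^ p * ((Ψ' s) ^ θ) ^ p :=
              Real.mul_rpow hKsp.le (Real.rpow_nonneg hΨ'p.le _)
          _ = (K * (1+s)) ^ p * Ψ' s := by
              rw [← Real.rpow_mul hΨ'p.le, hθp, Real.rpow_one]
      have ha : (0:ℝ) < (Ψ s) ^ p := Real.rpow_pos_of_pos hΨp _
      have hb : (0:ℝ) < (K * (1+s)) ^ p := Real.rpow_pos_of_pos hKsp _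
      rw [Real.rpow_neg hKsp.le, Real.rpow_neg hΨp.le]
      rw [inv_mul_eq_div, le_div_iff₀ ha, inv_mul_le_iff₀ hb]
      exact h1
    have e : K ^ (-p) * (1 * (1-p) * (1+s) ^ (1-p-1)) = (1-p) * ((K*(1+s)) ^ (-p)) := by
      have : (1:ℝ) - p - 1 = -p := by ring
      rw [this, Real.mul_rpow hK.le h1sp.le]; ring
    have e2 : Ψ' s * (1-p) * (Ψ s) ^ (1-p-1) = (1-p) * ((Ψ s) ^ (-p) * Ψ' s) := by
      have : (1:ℝ) - p - 1 = -p := by ring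
      rw [this]; ring
    have hmul := mul_le_mul_of_nonpos_left key (show (1:ℝ) - p ≤ 0 by linarith)
    simp only [hDdef]
    rw [e, e2]
    linarith
  have hanti : AntitoneOn H (Set.Ici (1:ℝ)) := by
    apply antitoneOn_of_deriv_nonpos (convex_Ici 1)
    · exact fun s hs => ((hH s hs).continuousAt).continuousWithinAt
    · rw [interior_Ici]
      exact fun s hs => ((hH s (le_of_lt hs)).differentiableAt).differentiableWithinAt
    · rw [interior_Ici]
      intro s hs
      rw [(hH s (le_of_lt hs)).deriv]
      exact hDnonpos s (le_of_lt hs)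
  have hbound : ∀ T : ℝ, 1 ≤ T →
      K ^ (-p) * 2 ^ ((1:ℝ)-p) - K ^ (-p) * (1+T) ^ (1-p) ≤ (Ψ 1) ^ ((1:ℝ)-p) := by
    intro T hT
    have h1 := hanti (Set.self_mem_Ici) (Set.mem_Ici.2 hT) hT
    have h2 : (0:ℝ) < (Ψ T) ^ (1-p) := Real.rpow_pos_of_pos (hΨpos T hT) _
    simp only [hHdef] at h1
    norm_num at h1 ⊢
    linarith
  have hlim : Filter.Tendsto (fun T : ℝ => K ^ (-p) * 2 ^ ((1:ℝ)-p) - K ^ (-p) * (1+T) ^ (1-p))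
      Filter.atTop (nhds (K ^ (-p) * 2 ^ ((1:ℝ)-p))) := by
    have h0 : Filter.Tendsto (fun T : ℝ => (1+T) ^ (1-p)) Filter.atTop (nhds 0) := by
      have h1 : Filter.Tendsto (fun x : ℝ => x ^ (-(p-1))) Filter.atTop (nhds 0) :=
        tendsto_rpow_neg_atTop (by linarith)
      have h2 : Filter.Tendsto (fun T : ℝ => 1 + T) Filter.atTop Filter.atTop :=
        Filter.tendsto_atTop_add_const_left _ 1 Filter.tendsto_id
      have := h1.comp h2
      convert this using 2 with T
      simp [Function.comp]
    have := Filter.Tendsto.const_mul (K ^ (-p)) h0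
    simpa using (tendsto_const_nhds (x := K ^ (-p) * 2 ^ ((1:ℝ)-p))).sub this
  have hfinal : K ^ (-p) * 2 ^ ((1:ℝ)-p) ≤ (Ψ 1) ^ ((1:ℝ)-p) :=
    le_of_tendsto hlim (Filter.eventually_atTop.2 ⟨1, hbound⟩)
  -- contradiction
  have hΨ1 : 2 * K ^ ((1:ℝ)/(1-θ)) < Ψ 1 := by
    have := hlb 1 le_rfl
    linarith
  have hcpos : (0:ℝ) < 2 * K ^ ((1:ℝ)/(1-θ)) := by positivity
  have hlt : (Ψ 1) ^ ((1:ℝ)-p) < (2 * K ^ ((1:ℝ)/(1-θ))) ^ ((1:ℝ)-p) :=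
    Real.rpow_lt_rpow_of_neg hcpos hΨ1 (by linarith)
  have hcomp : (2 * K ^ ((1:ℝ)/(1-θ))) ^ ((1:ℝ)-p) = 2 ^ ((1:ℝ)-p) * K ^ (-p) := by
    have hexp : (1:ℝ)/(1-θ) * (1-p) = -p := by
      rw [hpdef]
      have h1θ : (1:ℝ) - θ ≠ 0 := by linarith
      field_simp
      ring
    rw [Real.mul_rpow (by norm_num) hKr.le, ← Real.rpow_mul hK.le, hexp]
  rw [hcomp] at hlt
  linarith [hlt, hfinal]
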